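/- There exists a constant κ₃ > 0, depending only on the cut-off function χ, such that for every p ∈ [1, ∞] and for all t ≥ 0 one has ‖R^χ(·,t)‖_{L^p(ℝ²)} ≤ κ₃/(1+t). -/

import Mathlib

open MeasureTheory Real
open scoped ENNReal

noncomputable section

abbrev E2 := EuclideanSpace ℝ (Fin 2)

/-- The rotation `x ↦ x^⊥ = (-x₂, x₁)`. -/
noncomputable def perp (x : E2) : E2 :=
  (WithLp.equiv 2 (Fin 2 → ℝ)).symm ![-(x 1), x 0]

/-- The Oseen vortex velocity field `Θ(x,t)`. -/
noncomputable def Theta (t : ℝ) (x : E2) : E2 :=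
  ((1 / (2 * π)) * (1 - Real.exp (-‖x‖ ^ 2 / (4 * (1 + t)))) / ‖x‖ ^ 2) • perp x

/-- The Oseen vorticity `Ξ(x,t)`. -/
noncomputable def Xi (t : ℝ) (x : E2) : ℝ :=
  (1 / (4 * π * (1 + t))) * Real.exp (-‖x‖ ^ 2 / (4 * (1 + t)))

/-- A smooth radially symmetric cut-off function, nondecreasing along rays,
vanishing on `{‖x‖ ≤ ρ}` and equal to `1` on `{‖x‖ ≥ M}`. -/
structure IsCutoff (χ : E2 → ℝ) (ρ M : ℝ) : Prop where
  smooth : ContDiff ℝ (⊤ : ℕ∞) χ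
  mem01 : ∀ x : E2, χ x ∈ Set.Icc (0 : ℝ) 1
  radial_mono : ∀ x y : E2, ‖x‖ ≤ ‖y‖ → χ x ≤ χ y
  zero_near : ∀ x : E2, ‖x‖ ≤ ρ → χ x = 0
  one_far : ∀ x : E2, M ≤ ‖x‖ → χ x = 1
  rho_pos : 0 < ρ
  rho_lt_M : ρ < M

/-- The truncated Oseen vortex `u^χ(x,t) = χ(x) Θ(x,t)`. -/
noncomputable def uchi (χ : E2 → ℝ) (t : ℝ) (x : E2) : E2 := χ x • Theta t x

/-- The Laplacian of a scalar function on `ℝ²`. -/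
noncomputable def lap (f : E2 → ℝ) (x : E2) : ℝ :=
  ∑ i : Fin 2, fderiv ℝ (fun y => fderiv ℝ f y (EuclideanSpace.single i 1)) x
    (EuclideanSpace.single i 1)

/-- The remainder term `R^χ(x,t) = Θ Δχ + 2 ((x·∇χ)/|x|²)(x^⊥ Ξ − Θ)`. -/
noncomputable def Rchi (χ : E2 → ℝ) (t : ℝ) (x : E2) : E2 :=
  lap χ x • Theta t x + (2 * fderiv ℝ χ x x / ‖x‖ ^ 2) • (Xi t x • perp x - Theta t x)

lemma norm_perp (x : E2) : ‖perp x‖ = ‖x‖ := by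
  unfold perp
  rw [EuclideanSpace.norm_eq, EuclideanSpace.norm_eq]
  simp [Fin.sum_univ_two, WithLp.equiv_symm_apply, PiLp.toLp_apply, Real.norm_eq_abs, sq_abs, add_comm]

/-- If `f` is constant on an open set, its `fderiv` vanishes there. -/
lemma fderiv_zero_of_const_on {f : E2 → ℝ} {c : ℝ} {U : Set E2} (hU : IsOpen U)
    (hf : ∀ y ∈ U, f y = c) {x : E2} (hx : x ∈ U) : fderiv ℝ f x = 0 := by
  have h : f =ᶠ[nhds x] fun _ => c :=
    Filter.eventually_of_mem (hU.mem_nhds hx) hf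
  rw [h.fderiv_eq, fderiv_fun_const]
  rfl

/-- If `f` is constant on an open set, its Laplacian vanishes there. -/
lemma lap_zero_of_const_on {f : E2 → ℝ} {c : ℝ} {U : Set E2} (hU : IsOpen U)
    (hf : ∀ y ∈ U, f y = c) {x : E2} (hx : x ∈ U) : lap f x = 0 := by
  unfold lap
  have h : ∀ i : Fin 2,
      fderiv ℝ (fun y => fderiv ℝ f y (EuclideanSpace.single i 1)) x = 0 := by
    intro i
    have hev : (fun y => fderiv ℝ f y (EuclideanSpace.single i 1)) =ᶠ[nhds x]
        fun _ => (0 : ℝ) :=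
      Filter.eventually_of_mem (hU.mem_nhds hx) fun y hy => by
        simp [fderiv_zero_of_const_on hU hf hy]
    rw [hev.fderiv_eq, fderiv_fun_const]
    rfl
  simp [h]

/-- Pointwise bound on the Oseen velocity. -/
lemma norm_Theta_le {t : ℝ} (ht : 0 ≤ t) {x : E2} (hx : x ≠ 0) :
    ‖Theta t x‖ ≤ ‖x‖ / (8 * π * (1 + t)) := by
  have hπ := Real.pi_pos
  have h1t : (0:ℝ) < 1 + t := by linarith
  have hx0 : (0:ℝ) < ‖x‖ := norm_pos_iff.mpr hx
  have hx2 : (0:ℝ) < ‖x‖ ^ 2 := by positivity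
  set b := Real.exp (-‖x‖ ^ 2 / (4 * (1 + t))) with hb
  have hb1 : b ≤ 1 := by
    rw [hb, Real.exp_le_one_iff]
    have h : (0:ℝ) ≤ ‖x‖ ^ 2 / (4 * (1 + t)) := by positivity
    have hrw : -‖x‖ ^ 2 / (4 * (1 + t)) = -(‖x‖ ^ 2 / (4 * (1 + t))) := by ring
    linarith
  have hb2 : 1 - b ≤ ‖x‖ ^ 2 / (4 * (1 + t)) := by
    have h := Real.add_one_le_exp (-‖x‖ ^ 2 / (4 * (1 + t)))
    have hrw : -‖x‖ ^ 2 / (4 * (1 + t)) = -(‖x‖ ^ 2 / (4 * (1 + t))) := by ring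
    linarith
  have hcoef : (0:ℝ) ≤ 1 / (2 * π) * (1 - b) / ‖x‖ ^ 2 := by
    have : (0:ℝ) ≤ 1 - b := by linarith
    positivity
  have hnorm : ‖Theta t x‖ = 1 / (2 * π) * (1 - b) / ‖x‖ ^ 2 * ‖x‖ := by
    rw [Theta, norm_smul, norm_perp, Real.norm_eq_abs, abs_of_nonneg hcoef]
  rw [hnorm]
  calc 1 / (2 * π) * (1 - b) / ‖x‖ ^ 2 * ‖x‖
      ≤ 1 / (2 * π) * (‖x‖ ^ 2 / (4 * (1 + t))) / ‖x‖ ^ 2 * ‖x‖ := by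
        gcongr
    _ = ‖x‖ / (8 * π * (1 + t)) := by
        field_simp
        ring

/-- There is `κ₃ > 0`, depending only on `χ`, such that for every `p ∈ [1,∞]` and
all `t ≥ 0`, `‖R^χ(·,t)‖_{L^p(ℝ²)} ≤ κ₃/(1+t)`. -/
theorem Rchi_Lp_bound (χ : E2 → ℝ) (ρ M : ℝ) (hχ : IsCutoff χ ρ M) :
    ∃ κ₃ : ℝ, 0 < κ₃ ∧ ∀ p : ℝ≥0∞, 1 ≤ p → ∀ t : ℝ, 0 ≤ t →
      eLpNorm (fun x => Rchi χ t x) p volume ≤ ENNReal.ofReal (κ₃ / (1 + t)) := by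
  have hπ := Real.pi_pos
  have hρ : (0:ℝ) < ρ := hχ.rho_pos
  have hM : (0:ℝ) < M := hρ.trans hχ.rho_lt_M
  -- bound on the first derivative
  have hd1 : ContDiff ℝ (⊤ : ℕ∞) (fderiv ℝ χ) := hχ.smooth.fderiv_right (by simp)
  obtain ⟨B₁, hB₁⟩ := (isCompact_closedBall (0:E2) M).exists_bound_of_continuousOn
    hd1.continuous.continuousOn
  -- continuity and bound for the Laplacian
  have hlapc : Continuous (lap χ) := by
    unfold lap
    refine continuous_finset_sum _ fun i _ => ?_
    have h1 : ContDiff ℝ (⊤ : ℕ∞) fun y => fderiv ℝ χ y (EuclideanSpace.single i 1) :=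
      hd1.clm_apply contDiff_const
    have h2 : ContDiff ℝ (⊤ : ℕ∞) (fderiv ℝ fun y => fderiv ℝ χ y (EuclideanSpace.single i 1)) :=
      h1.fderiv_right (by simp)
    have h3 : ContDiff ℝ (⊤ : ℕ∞) fun x =>
        fderiv ℝ (fun y => fderiv ℝ χ y (EuclideanSpace.single i 1)) x
          (EuclideanSpace.single i 1) :=
      h2.clm_apply contDiff_const
    exact h3.continuous
  obtain ⟨B₂, hB₂⟩ := (isCompact_closedBall (0:E2) M).exists_bound_of_continuousOn
    hlapc.continuousOn
  set B₁' : ℝ := max B₁ 0 with hB₁'def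
  set B₂' : ℝ := max B₂ 0 with hB₂'def
  have hB₁'0 : (0:ℝ) ≤ B₁' := le_max_right _ _
  have hB₂'0 : (0:ℝ) ≤ B₂' := le_max_right _ _
  set C : ℝ := B₂' * M / (8 * π) + 2 * B₁' / ρ * (3 * M / (8 * π)) + 1 with hCdef
  have hC0 : (0:ℝ) < C := by
    have h1 : (0:ℝ) ≤ B₂' * M / (8 * π) := by positivity
    have h2 : (0:ℝ) ≤ 2 * B₁' / ρ * (3 * M / (8 * π)) := by positivity
    rw [hCdef]; linarith
  -- the dominating set
  set S : Set E2 := Metric.closedBall 0 M with hSdef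
  -- pointwise bound
  have key : ∀ t : ℝ, 0 ≤ t → ∀ x : E2,
      ‖Rchi χ t x‖ ≤ S.indicator (fun _ => C / (1 + t)) x := by
    intro t ht x
    have h1t : (0:ℝ) < 1 + t := by linarith
    by_cases hxM : ‖x‖ ≤ M
    · have hmem : x ∈ S := by simpa [hSdef, Metric.mem_closedBall, dist_zero_right] using hxM
      rw [Set.indicator_of_mem hmem]
      by_cases hxρ : ‖x‖ < ρ
      · -- inside the small ball: χ ≡ 0 near x, so Rchi = 0
        have hU : IsOpen (Metric.ball (0:E2) ρ) := Metric.isOpen_ball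
        have hmemU : x ∈ Metric.ball (0:E2) ρ := by
          simpa [Metric.mem_ball, dist_zero_right] using hxρ
        have hconst : ∀ y ∈ Metric.ball (0:E2) ρ, χ y = 0 := fun y hy =>
          hχ.zero_near y (le_of_lt (by simpa [Metric.mem_ball, dist_zero_right] using hy))
        have hf0 : fderiv ℝ χ x = 0 := fderiv_zero_of_const_on hU hconst hmemU
        have hl0 : lap χ x = 0 := lap_zero_of_const_on hU hconst hmemU
        have : Rchi χ t x = 0 := by simp [Rchi, hf0, hl0]
        rw [this, norm_zero]
        positivity
      · -- the annulus: the main estimate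
        push_neg at hxρ
        have hx0 : (0:ℝ) < ‖x‖ := hρ.trans_le hxρ
        have hxne : x ≠ 0 := norm_pos_iff.mp hx0
        have hmem' : x ∈ Metric.closedBall (0:E2) M := hmem
        -- bound on Θ
        have hT : ‖Theta t x‖ ≤ M / (8 * π * (1 + t)) := by
          refine (norm_Theta_le ht hxne).trans ?_
          gcongr
        -- bound on Ξ • perp
        have hXiabs : |Xi t x| ≤ 1 / (4 * π * (1 + t)) := by
          have hexp1 : Real.exp (-‖x‖ ^ 2 / (4 * (1 + t))) ≤ 1 := by
            rw [Real.exp_le_one_iff]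
            have h1 : (0:ℝ) ≤ ‖x‖ ^ 2 / (4 * (1 + t)) := by positivity
            have h2 : -‖x‖ ^ 2 / (4 * (1 + t)) = -(‖x‖ ^ 2 / (4 * (1 + t))) := by ring
            linarith
          have hexp0 : (0:ℝ) ≤ Real.exp (-‖x‖ ^ 2 / (4 * (1 + t))) := (Real.exp_pos _).le
          have hXipos : (0:ℝ) ≤ Xi t x := by
            rw [Xi]; positivity
          rw [abs_of_nonneg hXipos, Xi]
          calc 1 / (4 * π * (1 + t)) * Real.exp (-‖x‖ ^ 2 / (4 * (1 + t)))
              ≤ 1 / (4 * π * (1 + t)) * 1 := by gcongr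
            _ = 1 / (4 * π * (1 + t)) := by ring
        have hXi : ‖Xi t x • perp x‖ ≤ M / (4 * π * (1 + t)) := by
          rw [norm_smul, norm_perp, Real.norm_eq_abs]
          calc |Xi t x| * ‖x‖ ≤ 1 / (4 * π * (1 + t)) * M := by
                apply mul_le_mul hXiabs hxM hx0.le (by positivity)
            _ = M / (4 * π * (1 + t)) := by ring
        -- bound on the coefficient
        have hfd : |fderiv ℝ χ x x| ≤ B₁' * ‖x‖ := by
          calc |fderiv ℝ χ x x| ≤ ‖fderiv ℝ χ x‖ * ‖x‖ :=
                (fderiv ℝ χ x).le_opNorm x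
            _ ≤ B₁' * ‖x‖ := by
                gcongr
                exact (hB₁ x hmem').trans (le_max_left _ _)
        have hcoef : |2 * fderiv ℝ χ x x / ‖x‖ ^ 2| ≤ 2 * B₁' / ρ := by
          rw [abs_div, abs_mul, abs_two, abs_of_nonneg (by positivity : (0:ℝ) ≤ ‖x‖ ^ 2)]
          calc 2 * |fderiv ℝ χ x x| / ‖x‖ ^ 2 ≤ 2 * (B₁' * ‖x‖) / ‖x‖ ^ 2 := by gcongr
            _ = 2 * B₁' / ‖x‖ := by field_simp
            _ ≤ 2 * B₁' / ρ := by gcongr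
        have hlapx : |lap χ x| ≤ B₂' := by
          have := hB₂ x hmem'
          rw [Real.norm_eq_abs] at this
          exact this.trans (le_max_left _ _)
        -- assemble
        calc ‖Rchi χ t x‖
            ≤ |lap χ x| * ‖Theta t x‖
              + |2 * fderiv ℝ χ x x / ‖x‖ ^ 2| * (‖Xi t x • perp x‖ + ‖Theta t x‖) := by
              rw [Rchi]
              refine (norm_add_le _ _).trans ?_
              rw [norm_smul, norm_smul, Real.norm_eq_abs, Real.norm_eq_abs]
              exact add_le_add le_rfl
                (mul_le_mul_of_nonneg_left (norm_sub_le _ _) (abs_nonneg _))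
          _ ≤ B₂' * (M / (8 * π * (1 + t)))
              + 2 * B₁' / ρ * (M / (4 * π * (1 + t)) + M / (8 * π * (1 + t))) := by
              have e1 : |lap χ x| * ‖Theta t x‖ ≤ B₂' * (M / (8 * π * (1 + t))) :=
                mul_le_mul hlapx hT (norm_nonneg _) hB₂'0
              have e2 : |2 * fderiv ℝ χ x x / ‖x‖ ^ 2| * (‖Xi t x • perp x‖ + ‖Theta t x‖)
                  ≤ 2 * B₁' / ρ * (M / (4 * π * (1 + t)) + M / (8 * π * (1 + t))) :=
                mul_le_mul hcoef (add_le_add hXi hT)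
                  (add_nonneg (norm_nonneg _) (norm_nonneg _))
                  (div_nonneg (by linarith) hρ.le)
              exact add_le_add e1 e2
          _ = (B₂' * M / (8 * π) + 2 * B₁' / ρ * (3 * M / (8 * π))) / (1 + t) := by
              field_simp
              ring
          _ ≤ C / (1 + t) := by
              apply (div_le_div_iff_of_pos_right h1t).mpr
              rw [hCdef]
              linarith
    · -- outside the big ball: χ ≡ 1 near x, so Rchi = 0
      push_neg at hxM
      have hU : IsOpen {y : E2 | M < ‖y‖} := isOpen_lt continuous_const continuous_norm
      have hmemU : x ∈ {y : E2 | M < ‖y‖} := hxM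
      have hconst : ∀ y ∈ {y : E2 | M < ‖y‖}, χ y = 1 := fun y hy =>
        hχ.one_far y (le_of_lt hy)
      have hf0 : fderiv ℝ χ x = 0 := fderiv_zero_of_const_on hU hconst hmemU
      have hl0 : lap χ x = 0 := lap_zero_of_const_on hU hconst hmemU
      have hz : Rchi χ t x = 0 := by simp [Rchi, hf0, hl0]
      have hnotmem : x ∉ S := by
        simp only [hSdef, Metric.mem_closedBall, dist_zero_right]
        linarith
      rw [Set.indicator_of_notMem hnotmem, hz, norm_zero]
  -- the global constant
  set K : ℝ≥0∞ := max 1 (volume S) with hKdef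
  have hKne : K ≠ ⊤ := by
    rw [hKdef]
    simp only [ne_eq, max_eq_top, not_or]
    exact ⟨ENNReal.one_ne_top, (measure_closedBall_lt_top).ne⟩
  have hK1 : (1:ℝ≥0∞) ≤ K := le_max_left _ _
  have hKr1 : (1:ℝ) ≤ K.toReal := by
    have := ENNReal.toReal_mono hKne hK1
    simpa using this
  refine ⟨C * K.toReal, by nlinarith, ?_⟩
  intro p hp t ht
  have h1t : (0:ℝ) < 1 + t := by linarith
  have hCt0 : (0:ℝ) ≤ C / (1 + t) := by positivity
  -- compare with the indicator
  have step1 : eLpNorm (fun x => Rchi χ t x) p volume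
      ≤ eLpNorm (S.indicator fun _ => C / (1 + t)) p volume := by
    apply eLpNorm_mono
    intro x
    refine (key t ht x).trans ?_
    rw [Real.norm_eq_abs]
    exact le_abs_self _
  have step2 : eLpNorm (S.indicator fun _ => C / (1 + t)) p volume
      ≤ ↑‖C / (1 + t)‖₊ * volume S ^ (1 / p.toReal) :=
    eLpNorm_indicator_const_le _ _
  -- bound the power of the measure
  have hexp0 : (0:ℝ) ≤ 1 / p.toReal := by positivity
  have hpow : volume S ^ (1 / p.toReal) ≤ K := by
    rcases le_or_gt (volume S) 1 with h | h
    · exact (ENNReal.rpow_le_one h hexp0).trans hK1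
    · have hexp1 : 1 / p.toReal ≤ 1 := by
        by_cases hptop : p = ⊤
        · simp [hptop]
        · have hpr : (1:ℝ) ≤ p.toReal := by
            have := ENNReal.toReal_mono hptop hp
            simpa using this
          rw [div_le_one (by linarith)]
          exact hpr
      calc volume S ^ (1 / p.toReal) ≤ volume S ^ (1:ℝ) :=
            ENNReal.rpow_le_rpow_of_exponent_le h.le hexp1
        _ = volume S := ENNReal.rpow_one _
        _ ≤ K := le_max_right _ _
  have hnn : (↑‖C / (1 + t)‖₊ : ℝ≥0∞) = ENNReal.ofReal (C / (1 + t)) :=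
    Real.enorm_eq_ofReal hCt0
  calc eLpNorm (fun x => Rchi χ t x) p volume
      ≤ ↑‖C / (1 + t)‖₊ * volume S ^ (1 / p.toReal) := step1.trans step2
    _ ≤ ENNReal.ofReal (C / (1 + t)) * K := by
        rw [hnn]; exact mul_le_mul_right hpow _
    _ = ENNReal.ofReal (C / (1 + t)) * ENNReal.ofReal K.toReal := by
        rw [ENNReal.ofReal_toReal hKne]
    _ = ENNReal.ofReal (C * K.toReal / (1 + t)) := by
        rw [← ENNReal.ofReal_mul hCt0]
        congr 1
        ring

end
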